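/- arXiv:2111.05896 — 7 statements merged into one kernel-verified Lean document; each statement's English description precedes it below -/
import Mathlib

section
/- Red component reduction, branching case: Let G be a graph and v ∈ V(G) such that G − v has two distinct connected components C1, C2 each containing no d-path, and suppose G[{v} ∪ V(C1) ∪ V(C2)] contains a d-path. Then G has a solution of size at most k (a set whose removal leaves no d-path) if and only if G − ({v} ∪ V(C1) ∪ V(C2)) has a solution of size at most k − 1. -/
/-- `G` restricted to vertex set `A` contains a path on `d` vertices as a (not
necessarily induced) subgraph. -/
def HasPathOn {V : Type*} (G : SimpleGraph V) (d : ℕ) (A : Set V) : Prop :=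
  ∃ p : Fin d → V, Function.Injective p ∧ (∀ i, p i ∈ A) ∧
    ∀ (i : ℕ) (h : i + 1 < d), G.Adj (p ⟨i, Nat.lt_of_succ_lt h⟩) (p ⟨i + 1, h⟩)

/-- `C` is (the vertex set of) a connected component of `G - v`. -/
def IsCompAvoiding {V : Type*} (G : SimpleGraph V) (v : V) (C : Set V) : Prop :=
  v ∉ C ∧ (G.induce C).Connected ∧
    ∀ a ∈ C, ∀ b : V, b ≠ v → G.Adj a b → b ∈ C

lemma hpo_mono {V : Type*} (G : SimpleGraph V) (d : ℕ) {A B : Set V}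
    (hAB : A ⊆ B) (h : HasPathOn G d A) : HasPathOn G d B := by
  obtain ⟨p, hinj, hmem, hadj⟩ := h
  exact ⟨p, hinj, fun i => hAB (hmem i), hadj⟩

theorem stmt7 {V : Type} [Fintype V] (d k : ℕ) (hd : 2 ≤ d) (hk : 1 ≤ k)
    (G : SimpleGraph V) (v : V) (C1 C2 : Set V)
    (h1 : IsCompAvoiding G v C1) (h2 : IsCompAvoiding G v C2) (hne : C1 ≠ C2)
    (hC1 : ¬ HasPathOn G d C1) (hC2 : ¬ HasPathOn G d C2)
    (hA : HasPathOn G d ({v} ∪ C1 ∪ C2)) :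
    (∃ S : Set V, ¬ HasPathOn G d Sᶜ ∧ S.ncard ≤ k) ↔
      (∃ S' : Set V, Disjoint S' ({v} ∪ C1 ∪ C2) ∧
        ¬ HasPathOn G d (({v} ∪ C1 ∪ C2) ∪ S')ᶜ ∧ S'.ncard ≤ k - 1) := by
  set A : Set V := {v} ∪ C1 ∪ C2 with hAdef
  constructor
  · rintro ⟨S, hS, hSk⟩
    refine ⟨S \ A, Set.disjoint_sdiff_left, ?_, ?_⟩
    · intro h
      refine hS (hpo_mono G d ?_ h)
      intro x hx
      simp only [Set.mem_compl_iff, Set.mem_union, Set.mem_diff] at hx ⊢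
      tauto
    · obtain ⟨x, hxS, hxA⟩ : (S ∩ A).Nonempty := by
        rw [Set.nonempty_iff_ne_empty]
        intro h
        apply hS
        refine hpo_mono G d ?_ hA
        intro y hy hyS
        exact Set.eq_empty_iff_forall_notMem.mp h y ⟨hyS, hy⟩
      have hss : S \ A ⊂ S :=
        ⟨Set.diff_subset, fun hsub => (hsub hxS).2 hxA⟩
      have := Set.ncard_lt_ncard hss (Set.toFinite S)
      omega
  · rintro ⟨S', hdisj, hS', hS'k⟩
    refine ⟨insert v S', ?_, ?_⟩
    · rintro ⟨p, hinj, hmem, hadj⟩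
      have hv : ∀ i, p i ≠ v := by
        intro i h
        exact hmem i (by simp [h])
      have hS'p : ∀ i, p i ∉ S' := by
        intro i h
        exact hmem i (by simp [h])
      have key : ∀ (C : Set V), IsCompAvoiding G v C → ¬ HasPathOn G d C →
          ∀ i : Fin d, p i ∉ C := by
        intro C hC hCp i hiC
        apply hCp
        refine ⟨p, hinj, ?_, hadj⟩
        have chain : ∀ n (h : n + 1 < d),
            (p ⟨n, Nat.lt_of_succ_lt h⟩ ∈ C ↔ p ⟨n + 1, h⟩ ∈ C) := by
          intro n h
          constructor
          · intro hn
            exact hC.2.2 _ hn _ (hv _) (hadj n h)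
          · intro hn
            exact hC.2.2 _ hn _ (hv _) ((hadj n h).symm)
        have base : ∀ n (hn : n < d), (p ⟨n, hn⟩ ∈ C ↔ p ⟨0, by omega⟩ ∈ C) := by
          intro n
          induction n with
          | zero => intro hn; rfl
          | succ m ih =>
            intro hn
            have hm : m < d := by omega
            rw [← chain m hn]
            exact ih hm
        have h0 : p ⟨0, by omega⟩ ∈ C := by
          have := (base i.1 i.2).mp (by simpa using hiC)
          exact this
        intro j
        have := (base j.1 j.2).mpr h0
        simpa using this
      apply hS'
      refine ⟨p, hinj, ?_, hadj⟩
      intro i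
      simp only [hAdef, Set.mem_compl_iff, Set.mem_union, Set.mem_singleton_iff]
      push_neg
      exact ⟨⟨⟨hv i, key C1 h1 hC1 i⟩, key C2 h2 hC2 i⟩, hS'p i⟩
    · have : (insert v S').ncard ≤ S'.ncard + 1 := Set.ncard_insert_le v S'
      omega
end

section
/- Red component reduction, deletion case: Let G be a graph and v ∈ V(G) such that G − v has two connected components C1, C2 each containing no d-path, and suppose G[{v} ∪ V(C1) ∪ V(C2)] contains no d-path. Let i be the maximum number of vertices of a path in G[{v} ∪ V(C1)] starting at v and j the analogue for C2, and assume i ≤ j. Then G has a solution of size at most k if and only if G − V(C1) has a solution of size at most k. -/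
/-- `G` restricted to `A` contains a path on `n` vertices starting at `v`. -/
def HasPathFromOn {V : Type*} (G : SimpleGraph V) (A : Set V) (v : V) (n : ℕ) : Prop :=
  ∃ p : Fin n → V, Function.Injective p ∧ (∀ i, p i ∈ A) ∧
    (∀ (i : ℕ) (h : i + 1 < n), G.Adj (p ⟨i, Nat.lt_of_succ_lt h⟩) (p ⟨i + 1, h⟩)) ∧
    ∀ h : 0 < n, p ⟨0, h⟩ = v

private lemma hasPathOn_mono {V : Type*} {G : SimpleGraph V} {d : ℕ} {A B : Set V}
    (hAB : A ⊆ B) (h : HasPathOn G d A) : HasPathOn G d B := by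
  obtain ⟨p, h1, h2, h3⟩ := h
  exact ⟨p, h1, fun l => hAB (h2 l), h3⟩

private lemma chain_fwd {V : Type*} {G : SimpleGraph V} {v : V} {C : Set V}
    (h : IsCompAvoiding G v C) {n : ℕ} {p : Fin n → V}
    (hadj : ∀ (l : ℕ) (h : l + 1 < n), G.Adj (p ⟨l, Nat.lt_of_succ_lt h⟩) (p ⟨l + 1, h⟩))
    {a : ℕ} {ha : a < n} (haC : p ⟨a, ha⟩ ∈ C) :
    ∀ b (hb : b < n), a ≤ b → (∀ (l : ℕ) (hl : l < n), a < l → l ≤ b → p ⟨l, hl⟩ ≠ v) →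
      p ⟨b, hb⟩ ∈ C := by
  intro b
  induction b with
  | zero =>
    intro hb hab _
    have : a = 0 := by omega
    subst this; exact haC
  | succ m ih =>
    intro hb hab hv
    rcases Nat.lt_or_ge a (m + 1) with hlt | hge
    · have hm : m < n := by omega
      have hmC : p ⟨m, hm⟩ ∈ C := ih hm (by omega) (fun l hl h1 h2 => hv l hl h1 (by omega))
      exact h.2.2 _ hmC _ (hv (m+1) hb (by omega) le_rfl) (hadj m hb)
    · have : a = m + 1 := by omega
      subst this; exact haC

private lemma chain_bwd {V : Type*} {G : SimpleGraph V} {v : V} {C : Set V}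
    (h : IsCompAvoiding G v C) {n : ℕ} {p : Fin n → V}
    (hadj : ∀ (l : ℕ) (h : l + 1 < n), G.Adj (p ⟨l, Nat.lt_of_succ_lt h⟩) (p ⟨l + 1, h⟩))
    {a : ℕ} {ha : a < n} (haC : p ⟨a, ha⟩ ∈ C) :
    ∀ b (hb : b < n), b ≤ a → (∀ (l : ℕ) (hl : l < n), b ≤ l → l < a → p ⟨l, hl⟩ ≠ v) →
      p ⟨b, hb⟩ ∈ C := by
  have key : ∀ m b (hb : b < n), b + m = a →
      (∀ (l : ℕ) (hl : l < n), b ≤ l → l < a → p ⟨l, hl⟩ ≠ v) → p ⟨b, hb⟩ ∈ C := by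
    intro m
    induction m with
    | zero =>
      intro b hb hba _
      have : b = a := by omega
      subst this; exact haC
    | succ m ih =>
      intro b hb hba hv
      have hb1 : b + 1 < n := by omega
      have hCb1 : p ⟨b + 1, hb1⟩ ∈ C :=
        ih (b+1) hb1 (by omega) (fun l hl h1 h2 => hv l hl (by omega) h2)
      exact h.2.2 _ hCb1 _ (hv b hb le_rfl (by omega)) (hadj b hb1).symm
  intro b hb hba hv
  exact key (a - b) b hb (by omega) hv

private lemma all_in_comp {V : Type*} {G : SimpleGraph V} {v : V} {C : Set V}
    (h : IsCompAvoiding G v C) {n : ℕ} {p : Fin n → V}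
    (hadj : ∀ (l : ℕ) (h : l + 1 < n), G.Adj (p ⟨l, Nat.lt_of_succ_lt h⟩) (p ⟨l + 1, h⟩))
    (hnv : ∀ l : Fin n, p l ≠ v) {s : ℕ} (hs : s < n) (hsC : p ⟨s, hs⟩ ∈ C) :
    ∀ l : Fin n, p l ∈ C := by
  intro ⟨l, hl⟩
  rcases le_or_gt s l with hle | hlt
  · exact chain_fwd h hadj hsC l hl hle (fun l' hl' _ _ => hnv ⟨l', hl'⟩)
  · exact chain_bwd h hadj hsC l hl (by omega) (fun l' hl' _ _ => hnv ⟨l', hl'⟩)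

private lemma comp_subset {V : Type*} {G : SimpleGraph V} {v : V} {C1 C2 : Set V}
    (h1 : IsCompAvoiding G v C1) (h2 : IsCompAvoiding G v C2)
    {x : V} (hx1 : x ∈ C1) (hx2 : x ∈ C2) : C1 ⊆ C2 := by
  intro y hy
  have hreach : (G.induce C1).Reachable ⟨x, hx1⟩ ⟨y, hy⟩ := h1.2.1.preconnected _ _
  obtain ⟨w⟩ := hreach
  have key : ∀ (a b : C1) (w : (G.induce C1).Walk a b), (a : V) ∈ C2 → (b : V) ∈ C2 := by
    intro a b w
    induction w with
    | nil => exact id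
    | @cons a' b' c' hadj w ih =>
      intro ha
      apply ih
      have hadj' : G.Adj (a' : V) (b' : V) := hadj
      have hbv : (b' : V) ≠ v := fun h => h1.1 (h ▸ b'.2)
      exact h2.2.2 _ ha _ hbv hadj'
  exact key _ _ w hx2

private lemma chain_step {V : Type*} {G : SimpleGraph V} {n : ℕ} {p : Fin n → V}
    (hadj : ∀ (l : ℕ) (h : l + 1 < n), G.Adj (p ⟨l, Nat.lt_of_succ_lt h⟩) (p ⟨l + 1, h⟩))
    {a b : ℕ} (ha : a < n) (hb : b < n) (hab : b = a + 1) :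
    G.Adj (p ⟨a, ha⟩) (p ⟨b, hb⟩) := by
  subst hab; exact hadj a hb

private lemma hard_case {V : Type*} {d : ℕ} {G : SimpleGraph V} {v : V} {C1 C2 : Set V}
    (h1 : IsCompAvoiding G v C1) (h2 : IsCompAvoiding G v C2)
    (hdisj12 : ∀ x, x ∈ C1 → x ∈ C2 → False)
    (hA : ¬ HasPathOn G d ({v} ∪ C1 ∪ C2))
    {i j : ℕ}
    (himax : ∀ n, HasPathFromOn G ({v} ∪ C1) v n → n ≤ i)
    (hj : HasPathFromOn G ({v} ∪ C2) v j)
    (hij : i ≤ j)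
    {S' : Set V} (hS' : ¬ HasPathOn G d (C1 ∪ S')ᶜ) (hvS : v ∉ S')
    {p : Fin d → V} (hinj : Function.Injective p)
    (hmem : ∀ l, p l ∉ S')
    (hadj : ∀ (l : ℕ) (h : l + 1 < d), G.Adj (p ⟨l, Nat.lt_of_succ_lt h⟩) (p ⟨l + 1, h⟩))
    {t s : ℕ} (ht : t < d) (hs : s < t) (hsd : s < d)
    (hpt : p ⟨t, ht⟩ = v) (hsC : p ⟨s, hsd⟩ ∈ C1) :
    ∃ w, w ∈ S' ∧ w ∈ C2 := by
  -- v appears only at position t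
  have hvonly : ∀ (l : ℕ) (hl : l < d), l ≠ t → p ⟨l, hl⟩ ≠ v := by
    intro l hl hlt heq
    have h' : (⟨l, hl⟩ : Fin d) = ⟨t, ht⟩ := hinj (by rw [heq, hpt])
    have : l = t := by simpa using h'
    exact hlt this
  -- the prefix is in C1
  have hpre : ∀ (l : ℕ) (hl : l < d), l < t → p ⟨l, hl⟩ ∈ C1 := by
    intro l hl hlt
    rcases le_or_gt s l with hle | hgt
    · exact chain_fwd h1 hadj hsC l hl hle (fun l' hl' _ h2' => hvonly l' hl' (by omega))
    · exact chain_bwd h1 hadj hsC l hl (by omega) (fun l' hl' _ h2' => hvonly l' hl' (by omega))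
  -- helper: if everything after t is in C1 ∪ C2 we contradict hA
  have contraA : ¬ (∀ (l : ℕ) (hl : l < d), t < l → (p ⟨l, hl⟩ ∈ C1 ∨ p ⟨l, hl⟩ ∈ C2)) := by
    intro H
    apply hA
    refine ⟨p, hinj, ?_, hadj⟩
    intro ⟨l, hl⟩
    rcases lt_trichotomy l t with h | h | h
    · exact Or.inl (Or.inr (hpre l hl h))
    · subst h; exact Or.inl (Or.inl (by simpa using hpt))
    · rcases H l hl h with h' | h'
      · exact Or.inl (Or.inr h')
      · exact Or.inr h'
  -- t + 1 < d
  have ht1 : t + 1 < d := by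
    by_contra hcon
    exact contraA (fun l hl hlt => by omega)
  -- p (t+1) is not in C1 nor C2
  have hnot1 : p ⟨t + 1, ht1⟩ ∉ C1 := by
    intro hmem1
    apply contraA
    intro l hl hlt
    exact Or.inl (chain_fwd h1 hadj hmem1 l hl (by omega)
      (fun l' hl' hl1 _ => hvonly l' hl' (by omega)))
  have hnot2 : p ⟨t + 1, ht1⟩ ∉ C2 := by
    intro hmem2
    apply contraA
    intro l hl hlt
    exact Or.inr (chain_fwd h2 hadj hmem2 l hl (by omega)
      (fun l' hl' hl1 _ => hvonly l' hl' (by omega)))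
  -- the whole tail avoids C1 and C2
  have htail : ∀ (m : ℕ) (hm : m < d), t < m → p ⟨m, hm⟩ ∉ C1 ∧ p ⟨m, hm⟩ ∉ C2 := by
    intro m hm hmt
    constructor
    · intro hC
      exact hnot1 (chain_bwd h1 hadj hC (t+1) ht1 (by omega)
        (fun l' hl' h1' h2' => hvonly l' hl' (by omega)))
    · intro hC
      exact hnot2 (chain_bwd h2 hadj hC (t+1) ht1 (by omega)
        (fun l' hl' h1' h2' => hvonly l' hl' (by omega)))
  -- t + 1 ≤ i : the reversed prefix is a path from v in {v} ∪ C1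
  have hti : t + 1 ≤ i := by
    apply himax
    refine ⟨fun l => p ⟨t - l.val, by omega⟩, ?_, ?_, ?_, ?_⟩
    · intro ⟨l1, hl1⟩ ⟨l2, hl2⟩ heq
      have h' : t - l1 = t - l2 := by simpa using hinj heq
      simp only [Fin.mk.injEq]
      omega
    · intro ⟨l, hl⟩
      rcases Nat.eq_zero_or_pos l with h | h
      · subst h; exact Or.inl (by simpa using hpt)
      · exact Or.inr (hpre (t - l) (by omega) (by omega))
    · intro l hl
      exact (chain_step hadj (by omega) (by omega)
        (by omega : t - l = (t - (l + 1)) + 1)).symm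
    · intro _
      simpa using hpt
  -- the path from v into C2 with j vertices
  obtain ⟨r, hrinj, hrmem, hradj, hr0⟩ := hj
  have hjpos : 0 < j := by omega
  have htj : t < j := by omega
  have hrC2 : ∀ (l : ℕ) (hl : l < j), l ≠ 0 → r ⟨l, hl⟩ ∈ C2 := by
    intro l hl hl0
    rcases hrmem ⟨l, hl⟩ with h | h
    · exfalso
      apply hl0
      have h' : (⟨l, hl⟩ : Fin j) = ⟨0, hjpos⟩ := hrinj (by rw [hr0 hjpos]; exact h)
      simpa using h'
    · exact h
  -- the combined path R
  have hRidx : ∀ l : ℕ, l ≤ t → t - l < j := by omega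
  set R : Fin d → V := fun m => if h : m.val ≤ t then r ⟨t - m.val, hRidx _ h⟩ else p m
    with hRdef
  have hRle : ∀ (l : ℕ) (hl : l < d) (hle : l ≤ t), R ⟨l, hl⟩ = r ⟨t - l, hRidx _ hle⟩ := by
    intro l hl hle
    simp only [hRdef]
    rw [dif_pos hle]
  have hRgt : ∀ (l : ℕ) (hl : l < d) (hgt : t < l), R ⟨l, hl⟩ = p ⟨l, hl⟩ := by
    intro l hl hgt
    simp only [hRdef]
    rw [dif_neg (by omega)]
  have hRinj : Function.Injective R := by
    intro ⟨m1, hm1d⟩ ⟨m2, hm2d⟩ heq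
    simp only [Fin.mk.injEq]
    rcases le_or_gt m1 t with hm1 | hm1 <;> rcases le_or_gt m2 t with hm2 | hm2
    · rw [hRle m1 hm1d hm1, hRle m2 hm2d hm2] at heq
      have h' : t - m1 = t - m2 := by simpa using hrinj heq
      omega
    · exfalso
      rw [hRle m1 hm1d hm1, hRgt m2 hm2d hm2] at heq
      rcases hrmem ⟨t - m1, hRidx _ hm1⟩ with h | h
      · exact hvonly m2 hm2d (by omega) (by rw [← heq]; exact h)
      · exact (htail m2 hm2d hm2).2 (heq ▸ h)
    · exfalso
      rw [hRle m2 hm2d hm2, hRgt m1 hm1d hm1] at heq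
      rcases hrmem ⟨t - m2, hRidx _ hm2⟩ with h | h
      · exact hvonly m1 hm1d (by omega) (by rw [heq]; exact h)
      · exact (htail m1 hm1d hm1).2 (heq.symm ▸ h)
    · rw [hRgt m1 hm1d hm1, hRgt m2 hm2d hm2] at heq
      simpa using hinj heq
  have hRadj : ∀ (l : ℕ) (h : l + 1 < d),
      G.Adj (R ⟨l, Nat.lt_of_succ_lt h⟩) (R ⟨l + 1, h⟩) := by
    intro l hl
    rcases le_or_gt (l + 1) t with hle | hgt
    · rw [hRle l (by omega) (by omega), hRle (l + 1) hl hle]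
      exact (chain_step hradj (hRidx _ hle) (hRidx _ (by omega))
        (by omega : t - l = (t - (l + 1)) + 1)).symm
    · rcases le_or_gt l t with hle' | hgt'
      · -- l = t
        have hlt : l = t := by omega
        subst hlt
        rw [hRle l (by omega) le_rfl, hRgt (l + 1) hl (by omega)]
        have e0 : r ⟨l - l, hRidx _ le_rfl⟩ = v := by
          have : (⟨l - l, hRidx _ le_rfl⟩ : Fin j) = ⟨0, hjpos⟩ := by
            simp only [Fin.mk.injEq]; omega
          rw [this]; exact hr0 hjpos
        rw [e0, ← hpt]
        exact hadj l hl
      · rw [hRgt l (by omega) hgt', hRgt (l + 1) hl (by omega)]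
        exact hadj l hl
  -- R must hit C1 ∪ S' somewhere
  have hclaim : ∃ m : Fin d, R m ∈ C1 ∪ S' := by
    by_contra hcon
    push_neg at hcon
    exact hS' ⟨R, hRinj, fun m => hcon m, hRadj⟩
  obtain ⟨⟨m, hmd⟩, hm⟩ := hclaim
  rcases le_or_gt m t with hmle | hmgt
  · rw [hRle m hmd hmle] at hm
    rcases Nat.eq_zero_or_pos (t - m) with h0 | h0
    · exfalso
      have hv' : r ⟨t - m, hRidx _ hmle⟩ = v := by
        have e : (⟨t - m, hRidx _ hmle⟩ : Fin j) = ⟨0, hjpos⟩ := by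
          simp only [Fin.mk.injEq]; omega
        rw [e]; exact hr0 hjpos
      rw [hv'] at hm
      rcases hm with h | h
      · exact h1.1 h
      · exact hvS h
    · have hC2' : r ⟨t - m, hRidx _ hmle⟩ ∈ C2 := hrC2 _ _ (by omega)
      rcases hm with h | h
      · exact (hdisj12 _ h hC2').elim
      · exact ⟨_, h, hC2'⟩
  · exfalso
    rw [hRgt m hmd hmgt] at hm
    rcases hm with h | h
    · exact (htail m hmd hmgt).1 h
    · exact hmem _ h

theorem stmt8 {V : Type} [Fintype V] (d k : ℕ) (hd : 2 ≤ d)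
    (G : SimpleGraph V) (v : V) (C1 C2 : Set V)
    (h1 : IsCompAvoiding G v C1) (h2 : IsCompAvoiding G v C2) (hne : C1 ≠ C2)
    (hC1 : ¬ HasPathOn G d C1) (hC2 : ¬ HasPathOn G d C2)
    (hA : ¬ HasPathOn G d ({v} ∪ C1 ∪ C2))
    (i j : ℕ)
    (hi : HasPathFromOn G ({v} ∪ C1) v i)
    (himax : ∀ n, HasPathFromOn G ({v} ∪ C1) v n → n ≤ i)
    (hj : HasPathFromOn G ({v} ∪ C2) v j)
    (hjmax : ∀ n, HasPathFromOn G ({v} ∪ C2) v n → n ≤ j)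
    (hij : i ≤ j) :
    (∃ S : Set V, ¬ HasPathOn G d Sᶜ ∧ S.ncard ≤ k) ↔
      (∃ S' : Set V, Disjoint S' C1 ∧
        ¬ HasPathOn G d (C1 ∪ S')ᶜ ∧ S'.ncard ≤ k) := by
  constructor
  · rintro ⟨S, hS, hk⟩
    by_cases hx : (S ∩ C1).Nonempty
    · obtain ⟨x, hxS, hxC1⟩ := hx
      refine ⟨(S \ C1) ∪ {v}, ?_, ?_, ?_⟩
      · rw [Set.disjoint_left]
        rintro a (⟨_, h⟩ | h)
        · exact h
        · intro hc; rw [Set.mem_singleton_iff] at h; exact h1.1 (h ▸ hc)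
      · intro hpath
        apply hS
        apply hasPathOn_mono _ hpath
        rw [Set.compl_subset_compl]
        intro a haS
        by_cases hac : a ∈ C1
        · exact Or.inl hac
        · exact Or.inr (Or.inl ⟨haS, hac⟩)
      · have hsub2 : (S \ C1) ∪ {v} ⊆ (S \ {x}) ∪ {v} := by
          apply Set.union_subset_union_left
          rintro a ⟨haS, haC⟩
          exact ⟨haS, fun h => haC (Set.mem_singleton_iff.mp h ▸ hxC1)⟩
        have e1 : ((S \ C1) ∪ {v}).ncard ≤ ((S \ {x}) ∪ {v}).ncard :=
          Set.ncard_le_ncard hsub2 (Set.toFinite _)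
        have e2 : ((S \ {x}) ∪ {v}).ncard ≤ (S \ {x}).ncard + ({v} : Set V).ncard :=
          Set.ncard_union_le _ _
        have e3 : (S \ {x}).ncard = S.ncard - 1 := Set.ncard_diff_singleton_of_mem hxS
        have e4 : 0 < S.ncard := (Set.ncard_pos (Set.toFinite _)).mpr ⟨x, hxS⟩
        have e5 : ({v} : Set V).ncard = 1 := Set.ncard_singleton v
        omega
    · refine ⟨S, ?_, ?_, hk⟩
      · rw [Set.disjoint_left]
        intro a haS hac
        exact hx ⟨a, haS, hac⟩
      · intro hpath
        apply hS
        apply hasPathOn_mono _ hpath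
        rw [Set.compl_subset_compl]
        exact fun a haS => Or.inr haS
  · rintro ⟨S', hdisj, hS', hk⟩
    have hdisj12 : ∀ x, x ∈ C1 → x ∈ C2 → False := fun x a b =>
      hne (subset_antisymm (comp_subset h1 h2 a b) (comp_subset h2 h1 b a))
    by_cases hvS : v ∈ S'
    · refine ⟨S', ?_, hk⟩
      rintro ⟨p, hpinj, hpmem, hpadj⟩
      by_cases hC : ∃ l : Fin d, p l ∈ C1
      · obtain ⟨⟨sl, hsld⟩, hslC⟩ := hC
        apply hC1
        exact ⟨p, hpinj, all_in_comp h1 hpadj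
          (fun l h => hpmem l (by rw [h]; exact hvS)) hsld hslC, hpadj⟩
      · push_neg at hC
        apply hS'
        refine ⟨p, hpinj, fun l => ?_, hpadj⟩
        rintro (h | h)
        · exact hC l h
        · exact hpmem l h
    · by_cases hsol : HasPathOn G d S'ᶜ
      · -- hard case
        obtain ⟨p, hpinj, hpmem', hpadj⟩ := hsol
        have hpmem : ∀ l, p l ∉ S' := fun l => hpmem' l
        have hexC : ∃ sl : Fin d, p sl ∈ C1 := by
          by_contra hcon
          push_neg at hcon
          apply hS'
          refine ⟨p, hpinj, fun l => ?_, hpadj⟩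
          rintro (h | h)
          · exact hcon l h
          · exact hpmem l h
        have hexv : ∃ tl : Fin d, p tl = v := by
          by_contra hcon
          push_neg at hcon
          obtain ⟨⟨sl, hsld⟩, hslC⟩ := hexC
          exact hC1 ⟨p, hpinj, all_in_comp h1 hpadj hcon hsld hslC, hpadj⟩
        obtain ⟨⟨sl, hsld⟩, hslC⟩ := hexC
        obtain ⟨⟨tl, htld⟩, htlv⟩ := hexv
        have hslne : sl ≠ tl := by
          intro h
          apply h1.1
          have e : (⟨sl, hsld⟩ : Fin d) = ⟨tl, htld⟩ := by simp only [Fin.mk.injEq]; exact h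
          rw [e, htlv] at hslC
          exact hslC
        have hw : ∃ w, w ∈ S' ∧ w ∈ C2 := by
          rcases lt_or_gt_of_ne hslne with hlt | hgt
          · exact hard_case h1 h2 hdisj12 hA himax hj hij hS' hvS hpinj hpmem hpadj
              htld hlt hsld htlv hslC
          · -- reverse the path
            set q : Fin d → V := fun m => p ⟨d - 1 - m.val, by omega⟩ with hqdef
            have hqval : ∀ (l : ℕ) (hl : l < d), q ⟨l, hl⟩ = p ⟨d - 1 - l, by omega⟩ :=
              fun l hl => rfl
            have hqinj : Function.Injective q := by
              intro ⟨l1, hl1⟩ ⟨l2, hl2⟩ heq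
              rw [hqval l1 hl1, hqval l2 hl2] at heq
              have h' : d - 1 - l1 = d - 1 - l2 := by simpa using hpinj heq
              simp only [Fin.mk.injEq]
              omega
            have hqmem : ∀ l, q l ∉ S' := by
              intro ⟨l, hl⟩
              rw [hqval l hl]
              exact hpmem _
            have hqadj : ∀ (l : ℕ) (h : l + 1 < d),
                G.Adj (q ⟨l, Nat.lt_of_succ_lt h⟩) (q ⟨l + 1, h⟩) := by
              intro l hl
              rw [hqval l (by omega), hqval (l + 1) hl]
              exact (chain_step hpadj (by omega) (by omega)
                (by omega : d - 1 - l = (d - 1 - (l + 1)) + 1)).symm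
            have hqt : q ⟨d - 1 - tl, by omega⟩ = v := by
              rw [hqval _ (by omega)]
              have e : (⟨d - 1 - (d - 1 - tl), by omega⟩ : Fin d) = ⟨tl, htld⟩ := by
                simp only [Fin.mk.injEq]; omega
              rw [e]; exact htlv
            have hqs : q ⟨d - 1 - sl, by omega⟩ ∈ C1 := by
              rw [hqval _ (by omega)]
              have e : (⟨d - 1 - (d - 1 - sl), by omega⟩ : Fin d) = ⟨sl, hsld⟩ := by
                simp only [Fin.mk.injEq]; omega
              rw [e]; exact hslC
            exact hard_case h1 h2 hdisj12 hA himax hj hij hS' hvS hqinj hqmem hqadj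
              (by omega) (by omega : d - 1 - sl < d - 1 - tl) (by omega) hqt hqs
        obtain ⟨w, hwS, hwC2⟩ := hw
        refine ⟨(S' \ C2) ∪ {v}, ?_, ?_⟩
        · rintro ⟨q, hqinj, hqmem, hqadj⟩
          have hqv : ∀ l : Fin d, q l ≠ v :=
            fun l h => hqmem l (Or.inr (Set.mem_singleton_iff.mpr h))
          by_cases hC : ∃ l : Fin d, q l ∈ C1
          · obtain ⟨⟨ql, hqld⟩, hqlC⟩ := hC
            exact hC1 ⟨q, hqinj, all_in_comp h1 hqadj hqv hqld hqlC, hqadj⟩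
          · by_cases hC2' : ∃ l : Fin d, q l ∈ C2
            · obtain ⟨⟨ql, hqld⟩, hqlC⟩ := hC2'
              exact hC2 ⟨q, hqinj, all_in_comp h2 hqadj hqv hqld hqlC, hqadj⟩
            · push_neg at hC hC2'
              apply hS'
              refine ⟨q, hqinj, fun l => ?_, hqadj⟩
              rintro (h | h)
              · exact hC l h
              · exact hqmem l (Or.inl ⟨h, hC2' l⟩)
        · have hsub2 : (S' \ C2) ∪ {v} ⊆ (S' \ {w}) ∪ {v} := by
            apply Set.union_subset_union_left
            rintro a ⟨haS, haC⟩
            exact ⟨haS, fun h => haC (Set.mem_singleton_iff.mp h ▸ hwC2)⟩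
          have e1 : ((S' \ C2) ∪ {v}).ncard ≤ ((S' \ {w}) ∪ {v}).ncard :=
            Set.ncard_le_ncard hsub2 (Set.toFinite _)
          have e2 : ((S' \ {w}) ∪ {v}).ncard ≤ (S' \ {w}).ncard + ({v} : Set V).ncard :=
            Set.ncard_union_le _ _
          have e3 : (S' \ {w}).ncard = S'.ncard - 1 := Set.ncard_diff_singleton_of_mem hwS
          have e4 : 0 < S'.ncard := (Set.ncard_pos (Set.toFinite _)).mpr ⟨w, hwS⟩
          have e5 : ({v} : Set V).ncard = 1 := Set.ncard_singleton v
          omega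
      · exact ⟨S', hsol, hk⟩
end

section
/- Red star reduction: Fix d ≥ 4. Let G be a graph, C ⊆ V(G) with |C| ≤ ⌊d/2⌋ − 1, and L ⊆ V(G) with |L| ≥ 2|C| such that every vertex v ∈ L satisfies N_G(v) = C. Then for any x ∈ L, G has a set of at most k vertices whose removal leaves no d-path if and only if G − x has such a set of at most k vertices. -/
open Finset in
theorem card_le_card_of_succ_mem_of_pred_mem {d : ℕ} {A B : Finset ℕ} (hA : A ⊆ range d)
    (hAB : Disjoint A B) (hd : 2 * #B + 2 ≤ d)
    (hsucc : ∀ i ∈ A, i + 1 < d → i + 1 ∈ B) (hpred : ∀ i ∈ A, 0 < i → i - 1 ∈ B) :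
    #A ≤ #B := by
  by_cases hgap : ∃ s < d, s ∉ A ∧ s ∉ B
  · obtain ⟨s, hsd, hsA, hsB⟩ := hgap
    -- since `s ∉ A ∪ B`, moving positions below `s` up and those above `s` down is injective
    refine card_le_card_of_injOn (fun i => if i < s then i + 1 else i - 1) (fun i hi => ?_) ?_
    · have hi' : i ≠ s := fun h => hsA (h ▸ hi)
      dsimp only
      split_ifs with his
      · exact hsucc i hi (by omega)
      · exact hpred i hi (by omega)
    · intro a ha b hb hab
      have ha' : a ≠ s := fun h => hsA (h ▸ ha)
      have hb' : b ≠ s := fun h => hsA (h ▸ hb)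
      have hnot : ¬ (a + 1 = s ∧ s + 1 = b) := fun h => hsB (h.1 ▸ hsucc a ha (by omega))
      have hnot' : ¬ (b + 1 = s ∧ s + 1 = a) := fun h => hsB (h.1 ▸ hsucc b hb (by omega))
      simp only at hab
      split_ifs at hab <;> omega
  · -- `A ∪ B` covers all positions, yet `i ↦ i + 1` embeds `A` minus the last position in `B`
    push Not at hgap
    have hcover : d ≤ #A + #B := by
      rw [← card_union_of_disjoint hAB, ← card_range d]
      exact card_le_card fun s hs => by
        by_cases hsA : s ∈ A
        · exact mem_union_left _ hsA
        · exact mem_union_right _ (hgap s (mem_range.1 hs) hsA)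
    have hshift : #(A.erase (d - 1)) ≤ #B := by
      refine card_le_card_of_injOn (· + 1) (fun i hi => ?_) (fun a _ b _ h => by simpa using h)
      have hid := mem_range.1 (hA (mem_of_mem_erase hi))
      exact hsucc i (mem_of_mem_erase hi) (by have := ne_of_mem_erase hi; omega)
    have := pred_card_le_card_erase (s := A) (a := d - 1)
    omega

theorem HasPathOn.mono {V : Type*} {G : SimpleGraph V} {d : ℕ} {A B : Set V} (hAB : A ⊆ B) :
    HasPathOn G d A → HasPathOn G d B := by
  rintro ⟨p, hinj, hmem, hadj⟩
  exact ⟨p, hinj, fun i => hAB (hmem i), hadj⟩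

theorem SimpleGraph.adj_update_iff {V ι : Type*} [DecidableEq ι] {G : SimpleGraph V}
    {p : ι → V} {j : ι} {y : V} (hy : G.neighborSet y = G.neighborSet (p j)) (a b : ι) :
    G.Adj (Function.update p j y a) (Function.update p j y b) ↔ G.Adj (p a) (p b) := by
  have hy' : ∀ w, G.Adj y w ↔ G.Adj (p j) w := fun w => Set.ext_iff.1 hy w
  by_cases ha : a = j <;> by_cases hb : b = j <;> subst_vars <;>
    simp [Function.update_of_ne, *, G.adj_comm _ y, G.adj_comm (p b)]

def IsPathMap {V : Type*} (G : SimpleGraph V) {d : ℕ} (p : Fin d → V) : Prop :=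
  Function.Injective p ∧
    ∀ (i : ℕ) (h : i + 1 < d), G.Adj (p ⟨i, Nat.lt_of_succ_lt h⟩) (p ⟨i + 1, h⟩)

theorem hasPathOn_iff {V : Type*} {G : SimpleGraph V} {d : ℕ} {A : Set V} :
    HasPathOn G d A ↔ ∃ p : Fin d → V, IsPathMap G p ∧ ∀ i, p i ∈ A :=
  ⟨fun ⟨p, hinj, hmem, hadj⟩ => ⟨p, ⟨hinj, hadj⟩, hmem⟩,
    fun ⟨p, ⟨hinj, hadj⟩, hmem⟩ => ⟨p, hinj, hmem, hadj⟩⟩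

namespace IsPathMap

variable {V : Type*} {G : SimpleGraph V} {d : ℕ} {p : Fin d → V}

theorem exists_adj (hp : IsPathMap G p) (hd : 2 ≤ d) (i : Fin d) : ∃ j, G.Adj (p i) (p j) := by
  by_cases hi : i.val + 1 < d
  · exact ⟨⟨i + 1, hi⟩, hp.2 i hi⟩
  · have h := hp.2 (i - 1) (by omega)
    rw [show (⟨i - 1 + 1, _⟩ : Fin d) = i from Fin.ext (by simp only; omega)] at h
    exact ⟨_, h.symm⟩

theorem update (hp : IsPathMap G p) {j : Fin d} {y : V} (hy : y ∉ Set.range p)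
    (hN : G.neighborSet y = G.neighborSet (p j)) : IsPathMap G (Function.update p j y) := by
  refine ⟨fun a b hab => ?_, fun i h => (G.adj_update_iff hN _ _).2 (hp.2 i h)⟩
  by_cases ha : a = j <;> by_cases hb : b = j <;> subst_vars
  · rfl
  · exact absurd ⟨b, by simpa [Function.update_of_ne hb] using hab.symm⟩ hy
  · exact absurd ⟨a, by simpa [Function.update_of_ne ha] using hab⟩ hy
  · exact hp.1 (by simpa [Function.update_of_ne, ha, hb] using hab)

open scoped Classical in
theorem ncard_inter_range_eq (hp : IsPathMap G p) (s : Set V) :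
    (s ∩ Set.range p).ncard = ((Finset.univ.filter (p · ∈ s)).map Fin.valEmbedding).card := by
  rw [← Set.image_preimage_eq_inter_range, Set.ncard_image_of_injective _ hp.1,
    Finset.card_map, ← Set.ncard_coe_finset]
  congr 1
  ext
  simp

theorem ncard_inter_range_le (hp : IsPathMap G p) {C L : Set V} (hLC : Disjoint L C)
    (hN : ∀ v ∈ L, G.neighborSet v ⊆ C) (hd : 2 * (C ∩ Set.range p).ncard + 2 ≤ d) :
    (L ∩ Set.range p).ncard ≤ (C ∩ Set.range p).ncard := by
  rw [hp.ncard_inter_range_eq] at hd ⊢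
  rw [hp.ncard_inter_range_eq]
  refine card_le_card_of_succ_mem_of_pred_mem (fun i hi => ?_) ?_ hd ?_ ?_
  · obtain ⟨a, -, rfl⟩ := by simpa using hi
    simp
  · refine Finset.disjoint_left.2 fun i hiL hiC => ?_
    obtain ⟨a, haL, rfl⟩ := by simpa using hiL
    obtain ⟨b, hbC, hab⟩ := by simpa using hiC
    exact hLC.ne_of_mem haL hbC (by rw [Fin.ext hab.symm])
  · intro i hi hlt
    obtain ⟨a, haL, rfl⟩ := by simpa using hi
    simpa using ⟨⟨a + 1, hlt⟩, hN _ haL (hp.2 a hlt), rfl⟩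
  · intro i hi hpos
    obtain ⟨a, haL, rfl⟩ := by simpa using hi
    have h := hp.2 (a - 1) (by omega)
    rw [show (⟨a - 1 + 1, _⟩ : Fin d) = a from Fin.ext (by simp only; omega)] at h
    simpa using ⟨⟨a - 1, by omega⟩, hN _ haL h.symm, rfl⟩

end IsPathMap

theorem not_hasPathOn_compl_sdiff_union {V : Type*} {G : SimpleGraph V} {d : ℕ} {C L S : Set V}
    {x : V} (hd : 2 ≤ d) (hN : ∀ v ∈ L, G.neighborSet v ⊆ C) (hx : x ∈ L)
    (hS : ¬HasPathOn G d ({x} ∪ S)ᶜ) : ¬HasPathOn G d (S \ L ∪ C)ᶜ := by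
  rw [hasPathOn_iff]
  rintro ⟨p, hp, hmem⟩
  refine hS (hasPathOn_iff.2 ⟨p, hp, fun i => ?_⟩)
  have hiL : p i ∉ L := fun hiL => by
    obtain ⟨j, hij⟩ := hp.exists_adj hd i
    exact hmem j (Or.inr (hN _ hiL hij))
  have hi := hmem i
  simp only [Set.mem_compl_iff, Set.mem_union, Set.mem_sdiff, Set.mem_singleton_iff] at hi ⊢
  exact fun h => h.elim (fun h => hiL (h ▸ hx)) fun h => hi (Or.inl ⟨h, hiL⟩)

theorem not_hasPathOn_compl_of_neighborSet_eq {V : Type*} [Finite V] {G : SimpleGraph V} {d : ℕ}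
    {C L S : Set V} {x : V} (hN : ∀ v ∈ L, G.neighborSet v = C) (hx : x ∈ L)
    (hd : 2 * C.ncard + 2 ≤ d) (hcard : (S ∩ L).ncard + C.ncard < L.ncard)
    (hS : ¬HasPathOn G d ({x} ∪ S)ᶜ) : ¬HasPathOn G d Sᶜ := by
  rw [hasPathOn_iff]
  rintro ⟨p, hp, hmem⟩
  refine hS (hasPathOn_iff.2 ?_)
  by_cases hxp : x ∈ Set.range p
  swap
  · exact ⟨p, hp, fun i => by simpa using ⟨fun h => hxp ⟨i, h⟩, hmem i⟩⟩
  obtain ⟨j, rfl⟩ := hxp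
  have hLC : Disjoint L C := Set.disjoint_left.2 fun v hvL hvC =>
    G.loopless.irrefl v (by rwa [← hN v hvL] at hvC)
  have hCp : (C ∩ Set.range p).ncard ≤ C.ncard := Set.ncard_le_ncard Set.inter_subset_left
  have hLp : (L ∩ Set.range p).ncard ≤ C.ncard :=
    (hp.ncard_inter_range_le hLC (fun v hv => (hN v hv).le) (by omega)).trans hCp
  obtain ⟨y, hyL, hy⟩ := Set.exists_mem_notMem_of_ncard_lt_ncard
    (s := S ∩ L ∪ L ∩ Set.range p) (t := L)
    ((Set.ncard_union_le _ _).trans_lt (by omega))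
  simp only [Set.mem_union, Set.mem_inter_iff, hyL, and_true, true_and, not_or] at hy
  refine ⟨_, hp.update hy.2 (by rw [hN y hyL, hN _ hx]), fun i => ?_⟩
  rcases eq_or_ne i j with rfl | hij
  · simpa using ⟨fun h => hy.2 ⟨i, h.symm⟩, hy.1⟩
  · simpa [Function.update_of_ne hij, hp.1.ne hij] using hmem i

theorem stmt9 {V : Type} [Fintype V] (d k : ℕ) (hd : 4 ≤ d)
    (G : SimpleGraph V) (C L : Set V)
    (hC : C.ncard ≤ d / 2 - 1) (hL : 2 * C.ncard ≤ L.ncard)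
    (hN : ∀ v ∈ L, G.neighborSet v = C)
    (x : V) (hx : x ∈ L) :
    (∃ S : Set V, ¬ HasPathOn G d Sᶜ ∧ S.ncard ≤ k) ↔
      (∃ S' : Set V, x ∉ S' ∧ ¬ HasPathOn G d ({x} ∪ S')ᶜ ∧ S'.ncard ≤ k) := by
  constructor
  · rintro ⟨S, hS, hk⟩
    refine ⟨S \ {x}, fun h => h.2 rfl, fun h => hS (h.mono fun v hv => ?_),
      (Set.ncard_sdiff_singleton_le S x).trans hk⟩
    simp only [Set.mem_compl_iff, Set.mem_union, Set.mem_singleton_iff, Set.mem_sdiff] at hv ⊢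
    tauto
  · rintro ⟨S', -, hS', hk⟩
    rcases le_or_gt C.ncard (S' ∩ L).ncard with hle | hlt
    · refine ⟨S' \ L ∪ C, not_hasPathOn_compl_sdiff_union (by omega)
        (fun v hv => (hN v hv).le) hx hS', ?_⟩
      calc (S' \ L ∪ C).ncard ≤ (S' \ L).ncard + C.ncard := Set.ncard_union_le _ _
        _ ≤ (S' ∩ L).ncard + (S' \ L).ncard := by omega
        _ = S'.ncard := Set.ncard_inter_add_ncard_sdiff_eq_ncard S' L
        _ ≤ k := hk
    · exact ⟨S', not_hasPathOn_compl_of_neighborSet_eq hN hx (by omega) (by omega) hS', hk⟩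
end

section
/- In the setting of the red star reduction (d ≥ 4, C ⊆ V(G) with |C| ≤ ⌊d/2⌋ − 1, L an independent set with N_G(v) = C for all v ∈ L): every path on d vertices in G contains at most |C| vertices of L. -/
/-- Combinatorial key lemma: if every element of `SS` (positions in `[0,d)`) has
its successor (when `< d`) and predecessor (when `> 0`) in `CC`, and
`2 * |CC| + 2 ≤ d`, then `|SS| ≤ |CC|`. -/
lemma comb_key (d : ℕ) (SS CC : Finset ℕ)
    (hSd : ∀ i ∈ SS, i < d)
    (hsucc : ∀ i ∈ SS, i + 1 < d → i + 1 ∈ CC)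
    (hpred : ∀ i ∈ SS, 0 < i → i - 1 ∈ CC)
    (hdc : 2 * CC.card + 2 ≤ d) :
    SS.card ≤ CC.card := by
  by_contra hlt
  push_neg at hlt
  -- map i ↦ i + 1 on SS.erase (d-1)
  have hinjA : Set.InjOn (· + 1) (SS.erase (d - 1)) := by
    intro a _ b _ h; dsimp only at h; omega
  have himgA : (SS.erase (d - 1)).image (· + 1) ⊆ CC := by
    intro c hc
    simp only [Finset.mem_image, Finset.mem_erase] at hc
    obtain ⟨i, ⟨hne, hi⟩, rfl⟩ := hc
    exact hsucc i hi (by have := hSd i hi; omega)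
  have hcardA : (SS.erase (d - 1)).card ≤ CC.card := by
    calc (SS.erase (d - 1)).card = ((SS.erase (d - 1)).image (· + 1)).card :=
          (Finset.card_image_of_injOn hinjA).symm
      _ ≤ CC.card := Finset.card_le_card himgA
  have hmem_d1 : (d - 1) ∈ SS := by
    by_contra h
    rw [Finset.erase_eq_self.mpr h] at hcardA
    omega
  have hcardA' : (SS.erase (d - 1)).card = CC.card := by
    have := Finset.card_erase_of_mem hmem_d1
    omega
  have heqA : (SS.erase (d - 1)).image (· + 1) = CC :=
    Finset.eq_of_subset_of_card_le himgA
      (by rw [Finset.card_image_of_injOn hinjA, hcardA'])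
  have hA : ∀ c ∈ CC, ∃ i ∈ SS, i + 1 = c := by
    intro c hc
    rw [← heqA] at hc
    simp only [Finset.mem_image, Finset.mem_erase] at hc
    obtain ⟨i, ⟨_, hi⟩, h⟩ := hc
    exact ⟨i, hi, h⟩
  -- map i ↦ i - 1 on SS.erase 0
  have hinjB : Set.InjOn (· - 1) (SS.erase 0) := by
    intro a ha b hb h
    simp only [Finset.coe_erase, Set.mem_diff, Finset.mem_coe,
      Set.mem_singleton_iff] at ha hb
    dsimp only at h; omega
  have himgB : (SS.erase 0).image (· - 1) ⊆ CC := by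
    intro c hc
    simp only [Finset.mem_image, Finset.mem_erase] at hc
    obtain ⟨i, ⟨hne, hi⟩, rfl⟩ := hc
    exact hpred i hi (by omega)
  have hcardB : (SS.erase 0).card ≤ CC.card := by
    calc (SS.erase 0).card = ((SS.erase 0).image (· - 1)).card :=
          (Finset.card_image_of_injOn hinjB).symm
      _ ≤ CC.card := Finset.card_le_card himgB
  have hmem0 : 0 ∈ SS := by
    by_contra h
    rw [Finset.erase_eq_self.mpr h] at hcardB
    omega
  have hcardB' : (SS.erase 0).card = CC.card := by
    have := Finset.card_erase_of_mem hmem0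
    omega
  have heqB : (SS.erase 0).image (· - 1) = CC :=
    Finset.eq_of_subset_of_card_le himgB
      (by rw [Finset.card_image_of_injOn hinjB, hcardB'])
  have hB : ∀ c ∈ CC, c + 1 ∈ SS := by
    intro c hc
    rw [← heqB] at hc
    simp only [Finset.mem_image, Finset.mem_erase] at hc
    obtain ⟨i, ⟨hne, hi⟩, h⟩ := hc
    have : i = c + 1 := by omega
    rwa [← this]
  -- alternation: all odd numbers below d are in CC
  have halt : ∀ m : ℕ, 2 * m + 1 < d → (2 * m + 1) ∈ CC := by
    intro m
    induction m with
    | zero =>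
      intro h
      have := hsucc 0 hmem0 (by omega)
      simpa using this
    | succ n ih =>
      intro h
      have h1 : 2 * n + 1 < d := by omega
      have hc := ih h1
      have hs : (2 * n + 1) + 1 ∈ SS := hB _ hc
      have hlt2 : (2 * n + 1) + 1 + 1 < d := by omega
      have := hsucc _ hs hlt2
      have he : 2 * (n + 1) + 1 = (2 * n + 1) + 1 + 1 := by ring
      rwa [he]
  -- hence CC.card ≥ d / 2, contradiction
  have hinj2 : Set.InjOn (fun m => 2 * m + 1) (Finset.range (d / 2)) := by
    intro a _ b _ h; dsimp only at h; omega
  have hfin : (Finset.range (d / 2)).card ≤ CC.card := by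
    rw [← Finset.card_image_of_injOn hinj2]
    apply Finset.card_le_card
    intro c hc
    simp only [Finset.mem_image, Finset.mem_range] at hc
    obtain ⟨m, hm, rfl⟩ := hc
    exact halt m (by omega)
  rw [Finset.card_range] at hfin
  omega

theorem stmt10 {V : Type} [Fintype V] (d : ℕ) (hd : 4 ≤ d)
    (G : SimpleGraph V) (C L : Set V)
    (hC : C.ncard ≤ d / 2 - 1)
    (hN : ∀ v ∈ L, G.neighborSet v = C)
    (hInd : L.Pairwise fun a b => ¬ G.Adj a b)
    (p : Fin d → V) (hinj : Function.Injective p)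
    (hadj : ∀ (i : ℕ) (h : i + 1 < d),
      G.Adj (p ⟨i, Nat.lt_of_succ_lt h⟩) (p ⟨i + 1, h⟩)) :
    (L ∩ Set.range p).ncard ≤ C.ncard := by
  classical
  have hLC : ∀ v ∈ L, v ∉ C := by
    intro v hv hvC
    have hvv : G.Adj v v := by
      have : v ∈ G.neighborSet v := by rw [hN v hv]; exact hvC
      exact this
    exact G.irrefl hvv
  set SS : Finset (Fin d) := Finset.univ.filter (fun i => p i ∈ L) with hSS
  set CCf : Finset (Fin d) := Finset.univ.filter (fun i => p i ∈ C) with hCCf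
  have hmemSS : ∀ i, i ∈ SS ↔ p i ∈ L := by
    intro i; simp [hSS]
  have hmemCC : ∀ i, i ∈ CCf ↔ p i ∈ C := by
    intro i; simp [hCCf]
  have hL : (L ∩ Set.range p).ncard = SS.card := by
    have heq : L ∩ Set.range p = p '' ↑SS := by
      ext v
      constructor
      · rintro ⟨hv, i, rfl⟩
        exact ⟨i, by simpa using (hmemSS i).mpr hv, rfl⟩
      · rintro ⟨i, hi, rfl⟩
        have : p i ∈ L := (hmemSS i).mp (by simpa using hi)
        exact ⟨this, i, rfl⟩
    rw [heq, Set.ncard_image_of_injective _ hinj, Set.ncard_coe_finset]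
  have hCcard : CCf.card ≤ C.ncard := by
    have hsub : (p '' ↑CCf) ⊆ C := by
      rintro v ⟨i, hi, rfl⟩
      exact (hmemCC i).mp (by simpa using hi)
    calc CCf.card = (p '' ↑CCf).ncard := by
          rw [Set.ncard_image_of_injective _ hinj, Set.ncard_coe_finset]
      _ ≤ C.ncard := Set.ncard_le_ncard hsub (Set.toFinite C)
  -- move to ℕ
  set SN : Finset ℕ := SS.image Fin.val with hSN
  set CN : Finset ℕ := CCf.image Fin.val with hCN
  have hSNcard : SN.card = SS.card :=
    Finset.card_image_of_injective _ Fin.val_injective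
  have hCNcard : CN.card = CCf.card :=
    Finset.card_image_of_injective _ Fin.val_injective
  have hSd : ∀ n ∈ SN, n < d := by
    intro n hn
    simp only [hSN, Finset.mem_image] at hn
    obtain ⟨i, _, rfl⟩ := hn
    exact i.isLt
  have hsuccN : ∀ n ∈ SN, n + 1 < d → n + 1 ∈ CN := by
    intro n hn hn1
    simp only [hSN, Finset.mem_image] at hn
    obtain ⟨i, hi, rfl⟩ := hn
    have hiL : p i ∈ L := (hmemSS i).mp hi
    have hadj' := hadj i.val hn1
    have hieq : (⟨i.val, Nat.lt_of_succ_lt hn1⟩ : Fin d) = i := by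
      apply Fin.ext; rfl
    rw [hieq] at hadj'
    have hmem : p ⟨i.val + 1, hn1⟩ ∈ C := by
      rw [← hN (p i) hiL]
      exact hadj'
    have : (⟨i.val + 1, hn1⟩ : Fin d) ∈ CCf := (hmemCC _).mpr hmem
    simp only [hCN, Finset.mem_image]
    exact ⟨_, this, rfl⟩
  have hpredN : ∀ n ∈ SN, 0 < n → n - 1 ∈ CN := by
    intro n hn hn0
    simp only [hSN, Finset.mem_image] at hn
    obtain ⟨i, hi, rfl⟩ := hn
    have hiL : p i ∈ L := (hmemSS i).mp hi
    have hlt : i.val - 1 + 1 < d := by have := i.isLt; omega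
    have hadj' := hadj (i.val - 1) hlt
    have hieq : (⟨i.val - 1 + 1, hlt⟩ : Fin d) = i := by
      apply Fin.ext; simp; omega
    rw [hieq] at hadj'
    have hmem : p ⟨i.val - 1, Nat.lt_of_succ_lt hlt⟩ ∈ C := by
      rw [← hN (p i) hiL]
      exact hadj'.symm
    have : (⟨i.val - 1, Nat.lt_of_succ_lt hlt⟩ : Fin d) ∈ CCf := (hmemCC _).mpr hmem
    simp only [hCN, Finset.mem_image]
    exact ⟨_, this, rfl⟩
  have hdc : 2 * CN.card + 2 ≤ d := by
    have h1 : CN.card ≤ d / 2 - 1 := by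
      rw [hCNcard]; exact le_trans hCcard hC
    omega
  have hmain := comb_key d SN CN hSd hsuccN hpredN hdc
  rw [hL]
  calc SS.card = SN.card := hSNcard.symm
    _ ≤ CN.card := hmain
    _ = CCf.card := hCNcard
    _ ≤ C.ncard := hCcard
end

section
/- Dominance lemma: Let (H, R, B) be a correct subgraph branching rule for F-Subgraph Vertex Deletion, and suppose branch B ∈ B is dominated by branch B_d ∈ B (B_d ≠ B): there exist B^del ⊊ B and, writing H' = H − B^del, R' = R \ B^del, a nonempty R* ⊆ R' such that (1) H[R*] is not bumpy, (2) |R* ∩ B| ≥ |N_{H'}(R*) \ R*| ≥ 1, and (3) B_d ⊆ (B ∪ N_{H'}(R*)) \ R*. Then (H, R, B \ {B}) is a correct subgraph branching rule. -/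
/-- `G` restricted to the vertex set `A` contains some member of the family `F`
as a (not necessarily induced) subgraph. -/
def ContainsCopyOn {ι : Type} {W : ι → Type} (F : ∀ i, SimpleGraph (W i))
    {V : Type} (G : SimpleGraph V) (A : Set V) : Prop :=
  ∃ i, ∃ f : W i → V, Function.Injective f ∧ (∀ w, f w ∈ A) ∧
    ∀ a b, (F i).Adj a b → G.Adj (f a) (f b)

/-- Correctness of the subgraph branching rule `(H, R, Bs)` for `F`-Subgraph
Vertex Deletion: whenever the rule applies to a (finite) graph `G` via an
induced embedding `φ` such that red vertices only have neighbors inside the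
copy, and `S` is a solution for `G`, then there is a solution `S'` with
`|S'| ≤ |S|` containing `φ(B)` for some branch `B`. -/
def RuleCorrect {ι : Type} {W : ι → Type} (F : ∀ i, SimpleGraph (W i))
    {VH : Type} (H : SimpleGraph VH) (R : Set VH) (Bs : Set (Set VH)) : Prop :=
  ∀ (V : Type) (_ : Fintype V) (G : SimpleGraph V) (φ : VH → V),
    Function.Injective φ →
    (∀ a b : VH, H.Adj a b ↔ G.Adj (φ a) (φ b)) →
    (∀ r ∈ R, ∀ u : V, G.Adj (φ r) u → u ∈ Set.range φ) →
    ∀ S : Set V, ¬ ContainsCopyOn F G Sᶜ →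
      ∃ S' : Set V, ∃ B ∈ Bs,
        ¬ ContainsCopyOn F G S'ᶜ ∧ S'.ncard ≤ S.ncard ∧ φ '' B ⊆ S'

/-- The neighborhood `N_{H'}(R*) \ R*` where `H' = H - Bdel`. -/
def NprimeSet {VH : Type} (H : SimpleGraph VH) (Bdel Rstar : Set VH) : Set VH :=
  {u | u ∉ Bdel ∧ u ∉ Rstar ∧ ∃ r ∈ Rstar, H.Adj u r}


/-!
Take a solution `S'` that contains `φ(B)`. Replace `φ(R* ∩ B)` by `φ(N')`, where
`N' = N_{H'}(R*) \ R*`. By (2) this does not increase the size, and by (3) the new set contains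
`φ(B_d)`. It is still a solution: since red vertices have all their neighbours inside the copy
of `H`, the only neighbours of `φ(R*)` outside the new set are in `φ(R*)` itself, so a connected
member of `F` surviving the exchange lies either entirely in `φ(R*)`, which (1) forbids, or
entirely outside it, where it already avoided `S'`.
-/

theorem SimpleGraph.Reachable.mem_of_adj_closed {V : Type} {G : SimpleGraph V} {P : V → Prop}
    (hP : ∀ a b, G.Adj a b → P a → P b) {u v : V} (h : G.Reachable u v) (hu : P u) : P v := by
  rw [SimpleGraph.reachable_iff_reflTransGen] at h
  induction h with
  | refl => exact hu
  | tail _ hab ih => exact hP _ _ hab ih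

section ContainsCopyOn

variable {ι : Type} {W : ι → Type} {F : ∀ i, SimpleGraph (W i)} {V : Type} {G : SimpleGraph V}

theorem ContainsCopyOn.mono {A A' : Set V} (hA : A ⊆ A') (h : ContainsCopyOn F G A) :
    ContainsCopyOn F G A' :=
  let ⟨i, f, hf, hfA, hadj⟩ := h
  ⟨i, f, hf, fun w => hA (hfA w), hadj⟩

theorem ContainsCopyOn.of_image {VH : Type} {H : SimpleGraph VH} {φ : VH → V}
    (hind : ∀ a b, G.Adj (φ a) (φ b) → H.Adj a b) {A : Set VH}
    (h : ContainsCopyOn F G (φ '' A)) : ContainsCopyOn F H A := by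
  obtain ⟨i, f, hf, hfA, hadj⟩ := h
  choose g hgA hgf using hfA
  refine ⟨i, g, fun a b hab => hf ?_, hgA, fun a b hab => hind _ _ ?_⟩
  · rw [← hgf a, ← hgf b, hab]
  · rw [hgf a, hgf b]
    exact hadj a b hab

theorem ContainsCopyOn.inter_or_diff (hF : ∀ i, (F i).Connected) {A T : Set V}
    (hT : ∀ t ∈ T, ∀ u ∈ A, G.Adj t u → u ∈ T) (h : ContainsCopyOn F G A) :
    ContainsCopyOn F G (A ∩ T) ∨ ContainsCopyOn F G (A \ T) := by
  obtain ⟨i, f, hf, hfA, hadj⟩ := h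
  by_cases hmeet : ∃ w, f w ∈ T
  · obtain ⟨w₀, hw₀⟩ := hmeet
    have hall : ∀ w, f w ∈ T := fun w =>
      ((hF i).preconnected w₀ w).mem_of_adj_closed (P := fun w => f w ∈ T)
        (fun a b hab ha => hT _ ha _ (hfA b) (hadj a b hab)) hw₀
    exact Or.inl ⟨i, f, hf, fun w => ⟨hfA w, hall w⟩, hadj⟩
  · push Not at hmeet
    exact Or.inr ⟨i, f, hf, fun w => ⟨hfA w, hmeet w⟩, hadj⟩

end ContainsCopyOn

section Exchange

variable {VH V : Type} {H : SimpleGraph VH} {G : SimpleGraph V} {φ : VH → V}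
  {R B Bdel Rstar : Set VH} {S' : Set V}

variable (H φ S' B Bdel Rstar) in
def exchangedSolution : Set V :=
  (S' \ φ '' (Rstar ∩ B)) ∪ φ '' NprimeSet H Bdel Rstar

theorem exchangedSolution_adj_closed (hinj : Function.Injective φ)
    (hind : ∀ a b, H.Adj a b ↔ G.Adj (φ a) (φ b))
    (hred : ∀ r ∈ R, ∀ u, G.Adj (φ r) u → u ∈ Set.range φ)
    (hRsub : Rstar ⊆ R \ Bdel) (hBdel : Bdel ⊆ B) (hsub : φ '' B ⊆ S') :
    ∀ t ∈ φ '' Rstar, ∀ u ∈ (exchangedSolution H φ B Bdel Rstar S')ᶜ,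
      G.Adj t u → u ∈ φ '' Rstar := by
  rintro _ ⟨r, hr, rfl⟩ u hu hadj
  obtain ⟨x, rfl⟩ := hred r (hRsub hr).1 u hadj
  rw [hinj.mem_set_image]
  by_contra hxR
  apply hu
  by_cases hxdel : x ∈ Bdel
  · exact Or.inl ⟨hsub ⟨x, hBdel hxdel, rfl⟩, fun h => hxR (hinj.mem_set_image.1 h).1⟩
  · exact Or.inr ⟨x, ⟨hxdel, hxR, r, hr, ((hind r x).2 hadj).symm⟩, rfl⟩

theorem not_containsCopyOn_compl_exchangedSolution {ι : Type} {W : ι → Type}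
    {F : ∀ i, SimpleGraph (W i)} (hF : ∀ i, (F i).Connected) (hinj : Function.Injective φ)
    (hind : ∀ a b, H.Adj a b ↔ G.Adj (φ a) (φ b))
    (hred : ∀ r ∈ R, ∀ u, G.Adj (φ r) u → u ∈ Set.range φ)
    (hRsub : Rstar ⊆ R \ Bdel) (hBdel : Bdel ⊆ B) (hRfree : ¬ ContainsCopyOn F H Rstar)
    (hS' : ¬ ContainsCopyOn F G S'ᶜ) (hsub : φ '' B ⊆ S') :
    ¬ ContainsCopyOn F G (exchangedSolution H φ B Bdel Rstar S')ᶜ := by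
  intro h
  rcases h.inter_or_diff hF
      (exchangedSolution_adj_closed hinj hind hred hRsub hBdel hsub) with hin | hout
  · exact hRfree ((hin.mono Set.inter_subset_right).of_image fun a b => (hind a b).2)
  · refine hS' (hout.mono ?_)
    rintro v ⟨hv, hvR⟩ hvS
    exact hv (Or.inl ⟨hvS, fun h => hvR (Set.image_mono Set.inter_subset_left h)⟩)

theorem ncard_exchangedSolution_le [Finite V] (hinj : Function.Injective φ)
    (hcard : (NprimeSet H Bdel Rstar).ncard ≤ (Rstar ∩ B).ncard) (hsub : φ '' B ⊆ S') :
    (exchangedSolution H φ B Bdel Rstar S').ncard ≤ S'.ncard := by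
  have hRB : φ '' (Rstar ∩ B) ⊆ S' :=
    (Set.image_mono Set.inter_subset_right).trans hsub
  have hle : (Rstar ∩ B).ncard ≤ S'.ncard :=
    Set.ncard_image_of_injective _ hinj ▸ Set.ncard_le_ncard hRB
  calc (exchangedSolution H φ B Bdel Rstar S').ncard
      ≤ (S' \ φ '' (Rstar ∩ B)).ncard + (φ '' NprimeSet H Bdel Rstar).ncard :=
        Set.ncard_union_le _ _
    _ = S'.ncard - (Rstar ∩ B).ncard + (NprimeSet H Bdel Rstar).ncard := by
        rw [Set.ncard_sdiff hRB, Set.ncard_image_of_injective _ hinj,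
          Set.ncard_image_of_injective _ hinj]
    _ ≤ S'.ncard := by omega

theorem image_subset_exchangedSolution (hinj : Function.Injective φ) {Bd : Set VH}
    (hBdsub : Bd ⊆ (B ∪ NprimeSet H Bdel Rstar) \ Rstar) (hsub : φ '' B ⊆ S') :
    φ '' Bd ⊆ exchangedSolution H φ B Bdel Rstar S' := by
  rintro _ ⟨b, hb, rfl⟩
  obtain ⟨hbB | hbN, hbR⟩ := hBdsub hb
  · exact Or.inl ⟨hsub ⟨b, hbB, rfl⟩, fun h => hbR (hinj.mem_set_image.1 h).1⟩
  · exact Or.inr ⟨b, hbN, rfl⟩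

end Exchange

theorem stmt12_general {ι : Type} {W : ι → Type}
    (F : ∀ i, SimpleGraph (W i)) (hFconn : ∀ i, (F i).Connected)
    {VH : Type} (H : SimpleGraph VH)
    (R : Set VH) (Bs : Set (Set VH))
    (hcor : RuleCorrect F H R Bs)
    (B Bd : Set VH) (hBd : Bd ∈ Bs) (hne : Bd ≠ B)
    (Bdel : Set VH) (hBdel : Bdel ⊂ B)
    (Rstar : Set VH) (hRsub : Rstar ⊆ R \ Bdel)
    (hRfree : ¬ ContainsCopyOn F H Rstar)
    (hcard2 : (NprimeSet H Bdel Rstar).ncard ≤ (Rstar ∩ B).ncard)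
    (hBdsub : Bd ⊆ (B ∪ NprimeSet H Bdel Rstar) \ Rstar) :
    RuleCorrect F H R (Bs \ {B}) := by
  intro V _ G φ hinj hind hred S hS
  obtain ⟨S', B', hB', hS', hcard, hsub⟩ := hcor V ‹_› G φ hinj hind hred S hS
  obtain rfl | hBB := eq_or_ne B' B
  · exact ⟨exchangedSolution H φ B' Bdel Rstar S', Bd, ⟨hBd, hne⟩,
      not_containsCopyOn_compl_exchangedSolution hFconn hinj hind hred hRsub hBdel.subset
        hRfree hS' hsub,
      (ncard_exchangedSolution_le hinj hcard2 hsub).trans hcard,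
      image_subset_exchangedSolution hinj hBdsub hsub⟩
  · exact ⟨S', B', ⟨hB', hBB⟩, hS', hcard, hsub⟩

theorem stmt12 {ι : Type} [Fintype ι] [Nonempty ι] {W : ι → Type} [∀ i, Fintype (W i)]
    (F : ∀ i, SimpleGraph (W i)) (hFconn : ∀ i, (F i).Connected)
    {VH : Type} [Fintype VH] (H : SimpleGraph VH) (hHconn : H.Connected)
    (hHbumpy : ContainsCopyOn F H Set.univ)
    (R : Set VH) (Bs : Set (Set VH))
    (hcor : RuleCorrect F H R Bs)
    (B Bd : Set VH) (hB : B ∈ Bs) (hBd : Bd ∈ Bs) (hne : Bd ≠ B)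
    (Bdel : Set VH) (hBdel : Bdel ⊂ B)
    (Rstar : Set VH) (hRsub : Rstar ⊆ R \ Bdel) (hRne : Rstar.Nonempty)
    (hRfree : ¬ ContainsCopyOn F H Rstar)
    (hcard1 : 1 ≤ (NprimeSet H Bdel Rstar).ncard)
    (hcard2 : (NprimeSet H Bdel Rstar).ncard ≤ (Rstar ∩ B).ncard)
    (hBdsub : Bd ⊆ (B ∪ NprimeSet H Bdel Rstar) \ Rstar) :
    RuleCorrect F H R (Bs \ {B}) :=
  stmt12_general F hFconn H R Bs hcor B Bd hBd hne Bdel hBdel Rstar hRsub hRfree hcard2 hBdsub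
end

section
/- Branch adjustment lemma: Let (H, R, B) be a correct subgraph branching rule and let B* ⊆ V(H) be nonempty. Define B' = {B ∈ B : B* ⊄ B and B* ≠ B} ∪ {B*} (i.e., keep branches not containing B*, and add B*). Then (H, R, B') is a correct subgraph branching rule. -/
theorem RuleCorrect.of_forall_exists_subset {ι : Type} {W : ι → Type}
    {F : ∀ i, SimpleGraph (W i)} {VH : Type} {H : SimpleGraph VH} {R : Set VH}
    {Bs Bs' : Set (Set VH)} (hcor : RuleCorrect F H R Bs)
    (hrefine : ∀ B ∈ Bs, ∃ B' ∈ Bs', B' ⊆ B) :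
    RuleCorrect F H R Bs' := by
  intro V _ G φ hinj hind hred S hS
  obtain ⟨S', B, hB, hS', hcard, hBS'⟩ := hcor V ‹_› G φ hinj hind hred S hS
  obtain ⟨B', hB', hB'B⟩ := hrefine B hB
  exact ⟨S', B', hB', hS', hcard, (Set.image_mono hB'B).trans hBS'⟩

theorem stmt13_general {ι : Type} {W : ι → Type}
    (F : ∀ i, SimpleGraph (W i))
    {VH : Type} (H : SimpleGraph VH)
    (R : Set VH) (Bs : Set (Set VH))
    (hcor : RuleCorrect F H R Bs)
    (Bstar : Set VH) :
    RuleCorrect F H R ({Bb ∈ Bs | ¬ Bstar ⊆ Bb} ∪ {Bstar}) := by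
  refine hcor.of_forall_exists_subset fun B hB => ?_
  by_cases hsub : Bstar ⊆ B
  · exact ⟨Bstar, Or.inr rfl, hsub⟩
  · exact ⟨B, Or.inl ⟨hB, hsub⟩, subset_rfl⟩

theorem stmt13 {ι : Type} [Fintype ι] [Nonempty ι] {W : ι → Type} [∀ i, Fintype (W i)]
    (F : ∀ i, SimpleGraph (W i)) (hFconn : ∀ i, (F i).Connected)
    {VH : Type} [Fintype VH] (H : SimpleGraph VH) (hHconn : H.Connected)
    (hHbumpy : ContainsCopyOn F H Set.univ)
    (R : Set VH) (Bs : Set (Set VH))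
    (hcor : RuleCorrect F H R Bs)
    (Bstar : Set VH) (hBstar : Bstar.Nonempty) :
    RuleCorrect F H R ({Bb ∈ Bs | ¬ Bstar ⊆ Bb} ∪ {Bstar}) :=
  stmt13_general F H R Bs hcor Bstar
end

section
/- Let G be a graph, R* ⊆ V(G) a set of vertices such that N_G(R*) \ R* = {u_1, …, u_t} and G[R*] contains no member of F as a subgraph, where all members of F are connected. Then for any solution S for G, the set S' = (S \ R*) ∪ (N_G(R*) \ R*) is also a solution for G. -/
theorem stmt17 {ι : Type} [Fintype ι] [Nonempty ι] {W : ι → Type} [∀ i, Fintype (W i)]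
    (F : ∀ i, SimpleGraph (W i)) (hFconn : ∀ i, (F i).Connected)
    {V : Type} [Fintype V] (G : SimpleGraph V)
    (Rstar : Set V) (hRfree : ¬ ContainsCopyOn F G Rstar)
    (S : Set V) (hS : ¬ ContainsCopyOn F G Sᶜ) :
    ¬ ContainsCopyOn F G ((S \ Rstar) ∪ {u | u ∉ Rstar ∧ ∃ r ∈ Rstar, G.Adj r u})ᶜ := by
  rintro ⟨i, f, hinj, hmem, hadj⟩
  -- membership in Rstar propagates along edges of F i
  have key : ∀ a b : W i, (F i).Adj a b → f a ∈ Rstar → f b ∈ Rstar := by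
    intro a b hab ha
    by_contra hb
    have := hmem b
    simp only [Set.mem_compl_iff, Set.mem_union, Set.mem_setOf_eq, not_or] at this
    exact this.2 ⟨hb, f a, ha, hadj a b hab⟩
  have keyW : ∀ a b : W i, (F i).Reachable a b → f a ∈ Rstar → f b ∈ Rstar := by
    intro a b hr
    obtain ⟨p⟩ := hr
    induction p with
    | nil => exact id
    | cons h p ih => exact fun hx => ih (key _ _ h hx)
  by_cases hall : ∀ w, f w ∈ Rstar
  · exact hRfree ⟨i, f, hinj, hall, hadj⟩
  · push_neg at hall
    obtain ⟨w0, hw0⟩ := hall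
    have hnone : ∀ w, f w ∉ Rstar := by
      intro w hw
      exact hw0 (keyW w w0 ((hFconn i).preconnected w w0) hw)
    apply hS
    refine ⟨i, f, hinj, fun w => ?_, hadj⟩
    have := hmem w
    simp only [Set.mem_compl_iff, Set.mem_union, Set.mem_setOf_eq, not_or,
      Set.mem_diff] at this ⊢
    intro hwS
    exact this.1 ⟨hwS, hnone w⟩
end
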